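/- Convergence of SGT2-QL: let β > 0, let (α_k)_{k≥0} be deterministic step sizes with 0 ≤ α_k ≤ 1, Σ_{k} α_k = ∞ and Σ_{k} α_k² < ∞, and on a probability space let (s_k, a_k, s'_k)_{k≥0} be i.i.d. S×A×S-valued random variables whose common law assigns probability d(s,a)·P(s'|s,a) to (s,a,s'), where d(s,a) > 0 for all (s,a). Define random sequences Qᴬ_k, Qᴮ_k : S×A → ℝ by arbitrary deterministic initializations Qᴬ_0, Qᴮ_0 and the recursion: Qᴬ_{k+1}(s,a) = Qᴬ_k(s,a) + α_k·1{(s,a)=(s_k,a_k)}·(r(s_k,a_k,s'_k) + γ·max_{a'∈A} Qᴮ_k(s'_k,a') − Qᴬ_k(s_k,a_k) + β·(Qᴮ_k(s_k,a_k) − Qᴬ_k(s_k,a_k))) and Qᴮ_{k+1}(s,a) = Qᴮ_k(s,a) + α_k·1{(s,a)=(s_k,a_k)}·(r(s_k,a_k,s'_k) + γ·max_{a'∈A} Qᴬ_k(s'_k,a') − Qᴮ_k(s_k,a_k) + β·(Qᴬ_k(s_k,a_k) − Qᴮ_k(s_k,a_k))). Then, with probability one, Qᴬ_k(s,a) → Q*(s,a)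 and Qᴮ_k(s,a) → Q*(s,a) as k → ∞ for every (s,a) ∈ S×A. -/

import Mathlib

open Finset

/-- Maximum of `Q s' a'` over actions `a'`. -/
noncomputable def maxQ {S A : Type*} [Fintype A] [Nonempty A]
    (Q : S → A → ℝ) (s' : S) : ℝ :=
  univ.sup' univ_nonempty (fun a' => Q s' a')

/-- The Bellman optimality operator. -/
noncomputable def bellmanT {S A : Type*} [Fintype S] [Fintype A] [Nonempty A]
    (P r : S → A → S → ℝ) (γ : ℝ) (Q : S → A → ℝ) : S → A → ℝ :=
  fun s a => ∑ s', P s a s' * (r s a s' + γ * maxQ Q s')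

/-- Sup norm on `ℝ^{S×A}`. -/
noncomputable def supNorm {S A : Type*} [Fintype S] [Fintype A] [Nonempty S] [Nonempty A]
    (Q : S → A → ℝ) : ℝ :=
  univ.sup' univ_nonempty (fun p : S × A => |Q p.1 p.2|)

open Filter MeasureTheory ProbabilityTheory

/-!
Write the two tables as one table `Z k : Bool → S → A → ℝ` and let `e k = Z k - Q*`. Since `Q*`
is a fixed point of the `γ`-contraction `T`, an update at a visited pair reads
`e' = (1 - (1 + β) α) e + α · noise + O(α (γ + β) ‖e‖)`: a stochastic-approximation step of size
`(1 + β) α` with contraction factor `(γ + β) / (1 + β) < 1`, where the noise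
`r + γ max Q(s', ·) - (T Q)(s, a)` has conditional mean zero given the past samples. Once
`(1 + β) α_k ≤ 1` each update is a convex combination, so the iterates stay in a ball of
deterministic radius; the noise is then a bounded martingale difference, and `∑ α_k² < ∞` makes
its weighted sums converge almost surely (an `L²`-bounded martingale). Applied to the centred
visit indicators `1{visit} - d(s, a)` the same argument gives `∑ α_k 1{visit} = ∞` for every pair,
and a deterministic lemma on such recursions then gives `e k → 0`.
-/

open Topology

section StochasticApproximation

theorem tendsto_prod_Ico_one_sub_nhds_zero {b : ℕ → ℝ} {N : ℕ} (hb : ∀ k, N ≤ k → b k ≤ 1)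
    (hdiv : Tendsto (fun n => ∑ k ∈ range n, b k) atTop atTop) :
    Tendsto (fun n => ∏ k ∈ Ico N n, (1 - b k)) atTop (𝓝 0) := by
  have hexp : Tendsto (fun n => Real.exp (-∑ k ∈ Ico N n, b k)) atTop (𝓝 0) := by
    refine Real.tendsto_exp_atBot.comp (tendsto_neg_atTop_atBot.comp ?_)
    refine (tendsto_atTop_add_const_right _ (-∑ k ∈ range N, b k) hdiv).congr' ?_
    filter_upwards [eventually_ge_atTop N] with n hn
    rw [sum_Ico_eq_sub _ hn, sub_eq_add_neg]
  refine squeeze_zero (fun n => prod_nonneg fun k hk => ?_) (fun n => ?_) hexp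
  · linarith [hb k (mem_Ico.1 hk).1]
  · rw [← sum_neg_distrib, Real.exp_sum]
    refine prod_le_prod (fun k hk => ?_) (fun k _ => ?_)
    · linarith [hb k (mem_Ico.1 hk).1]
    · linarith [Real.add_one_le_exp (-b k)]

theorem eventually_le_add_of_le_one_sub_mul_add {b y : ℕ → ℝ} {C ε : ℝ} (hε : 0 < ε)
    (hb : ∀ᶠ k in atTop, b k ≤ 1)
    (hdiv : Tendsto (fun n => ∑ k ∈ range n, b k) atTop atTop)
    (hy : ∀ᶠ k in atTop, y (k + 1) ≤ (1 - b k) * y k + b k * C) :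
    ∀ᶠ n in atTop, y n ≤ C + ε := by
  obtain ⟨N, hN⟩ := eventually_atTop.1 (hb.and hy)
  set c₀ := max (y N - C) 0
  have hprod : ∀ n, N ≤ n → y n - C ≤ (∏ k ∈ Ico N n, (1 - b k)) * c₀ := by
    intro n hn
    induction n, hn using Nat.le_induction with
    | base => simp [c₀]
    | succ n hn ih =>
      obtain ⟨hb1, hyn⟩ := hN n hn
      rw [prod_Ico_succ_top hn, mul_right_comm]
      nlinarith
  have hsmall : ∀ᶠ n in atTop, (∏ k ∈ Ico N n, (1 - b k)) * c₀ < ε := by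
    have h := (tendsto_prod_Ico_one_sub_nhds_zero (fun k hk => (hN k hk).1) hdiv).mul_const c₀
    rw [zero_mul] at h
    exact h.eventually (gt_mem_nhds hε)
  filter_upwards [hsmall, eventually_ge_atTop N] with n hn hnN
  linarith [hprod n hnN]

theorem eventually_abs_le_add_of_abs_sub_le {b u x : ℕ → ℝ} {c ε : ℝ} (hε : 0 < ε)
    (hb : ∀ᶠ k in atTop, 0 ≤ b k ∧ b k ≤ 1)
    (hdiv : Tendsto (fun n => ∑ k ∈ range n, b k) atTop atTop)
    (hu : ∃ l, Tendsto (fun n => ∑ k ∈ range n, u k) atTop (𝓝 l))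
    (hx : ∀ᶠ k in atTop, |x (k + 1) - (1 - b k) * x k - u k| ≤ b k * c) :
    ∀ᶠ n in atTop, |x n| ≤ c + ε := by
  obtain ⟨l, hl⟩ := hu
  set U := fun n => ∑ k ∈ range n, u k - l
  have hU : ∀ᶠ n in atTop, |U n| ≤ ε / 3 := by
    have h := (tendsto_sub_nhds_zero_iff.2 hl).abs
    rw [abs_zero] at h
    exact h.eventually (ge_mem_nhds (by positivity))
  -- `x - U` satisfies the recursion without the `u` term, up to an error `b k (c + ε / 3)`
  have hφ : ∀ᶠ n in atTop, |x n - U n| ≤ c + ε / 3 + ε / 3 := by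
    refine eventually_le_add_of_le_one_sub_mul_add (by positivity) (hb.mono fun _ h => h.2) hdiv ?_
    filter_upwards [hb, hx, hU] with k ⟨hb0, hb1⟩ hxk hUk
    have hid : x (k + 1) - U (k + 1) =
        (x (k + 1) - (1 - b k) * x k - u k) + (1 - b k) * (x k - U k) - b k * U k := by
      simp only [U, sum_range_succ]; ring
    rw [hid]
    calc _ ≤ |x (k + 1) - (1 - b k) * x k - u k| + |(1 - b k) * (x k - U k)| + |b k * U k| :=
          (abs_sub _ _).trans (add_le_add_left (abs_add_le _ _) _)
      _ ≤ _ := by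
        rw [abs_mul, abs_mul, abs_of_nonneg hb0, abs_of_nonneg (by linarith : 0 ≤ 1 - b k)]
        nlinarith [mul_le_mul_of_nonneg_left hUk hb0]
  filter_upwards [hφ, hU] with n hφn hUn
  linarith [abs_sub_abs_le_abs_sub (x n) (U n)]

theorem tendsto_zero_of_eventually_le_mul_add {M : ℕ → ℝ} {κ D : ℝ} (hκ0 : 0 ≤ κ) (hκ1 : κ < 1)
    (hM0 : ∀ k, 0 ≤ M k) (hMD : ∀ k, M k ≤ D)
    (hM : ∀ D' ε, 0 < ε → (∀ᶠ k in atTop, M k ≤ D') → ∀ᶠ k in atTop, M k ≤ κ * D' + ε) :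
    Tendsto M atTop (𝓝 0) := by
  refine tendsto_order.2 ⟨fun c hc => .of_forall fun k => hc.trans_le (hM0 k), fun δ hδ => ?_⟩
  have hpow : ∀ j : ℕ, ∀ᶠ k in atTop, M k ≤ κ ^ j * D + δ / 2 := by
    intro j
    induction j with
    | zero => exact .of_forall fun k => by linarith [hMD k]
    | succ j ih =>
      filter_upwards [hM _ ((1 - κ) * (δ / 2)) (by nlinarith) ih] with k hk
      exact hk.trans_eq (by ring)
  obtain ⟨j, hj⟩ := (((tendsto_pow_atTop_nhds_zero_of_lt_one hκ0 hκ1).mul_const D).eventually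
    (gt_mem_nhds (by rw [zero_mul]; positivity : (0 : ℝ) * D < δ / 2))).exists
  filter_upwards [hpow j] with k hk
  linarith

theorem tendsto_zero_of_abs_sub_le_mul_norm {ι : Type*} [Fintype ι] {e b u : ℕ → ι → ℝ}
    {κ D : ℝ} (hκ0 : 0 ≤ κ) (hκ1 : κ < 1) (hD : ∀ k, ‖e k‖ ≤ D)
    (hb : ∀ i, ∀ᶠ k in atTop, 0 ≤ b k i ∧ b k i ≤ 1)
    (hdiv : ∀ i, Tendsto (fun n => ∑ k ∈ range n, b k i) atTop atTop)
    (hu : ∀ i, ∃ l, Tendsto (fun n => ∑ k ∈ range n, u k i) atTop (𝓝 l))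
    (he : ∀ i, ∀ᶠ k in atTop,
      |e (k + 1) i - (1 - b k i) * e k i - u k i| ≤ b k i * κ * ‖e k‖) :
    Tendsto e atTop (𝓝 0) := by
  refine tendsto_zero_iff_norm_tendsto_zero.2 <|
    tendsto_zero_of_eventually_le_mul_add hκ0 hκ1 (fun k => norm_nonneg _) hD ?_
  intro D' ε hε hD'
  have hD'0 : 0 ≤ D' := by
    obtain ⟨k, hk⟩ := hD'.exists
    exact (norm_nonneg _).trans hk
  have hcoord : ∀ i, ∀ᶠ k in atTop, |e k i| ≤ κ * D' + ε := by
    refine fun i => eventually_abs_le_add_of_abs_sub_le hε (hb i) (hdiv i) (hu i) ?_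
    filter_upwards [he i, hb i, hD'] with k hek hbk hk
    calc _ ≤ b k i * κ * ‖e k‖ := hek
      _ ≤ b k i * (κ * D') := by
        rw [mul_assoc]; exact mul_le_mul_of_nonneg_left (by gcongr) hbk.1
  filter_upwards [eventually_all.2 hcoord] with k hk
  exact (pi_norm_le_iff_of_nonneg (by positivity)).2 fun i => (Real.norm_eq_abs _).trans_le (hk i)

theorem eventually_mul_le_one_of_summable_sq {α : ℕ → ℝ} (hα : Summable fun k => α k ^ 2)
    {c : ℝ} (hc : 0 < c) : ∀ᶠ k in atTop, c * α k ≤ 1 := by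
  filter_upwards [hα.tendsto_atTop_zero.eventually (gt_mem_nhds (by positivity : 0 < c⁻¹ ^ 2))]
    with k hk
  have h := abs_lt_of_sq_lt_sq hk (by positivity)
  calc c * α k ≤ c * c⁻¹ := by gcongr; exact (le_abs_self _).trans h.le
    _ = 1 := mul_inv_cancel₀ hc.ne'

end StochasticApproximation

section Martingale

variable {Ω : Type*} {m0 : MeasurableSpace Ω} {μ : Measure Ω}

theorem integrable_of_abs_le [IsFiniteMeasure μ] {m : MeasurableSpace Ω} (hm : m ≤ m0)
    {g : Ω → ℝ} (hg : StronglyMeasurable[m] g) {C : ℝ} (hgC : ∀ ω, |g ω| ≤ C) :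
    Integrable g μ :=
  .of_bound (hg.mono hm).aestronglyMeasurable C (ae_of_all _ hgC)

theorem integral_mul_eq_zero_of_condExp_eq_zero {m : MeasurableSpace Ω} (hm : m ≤ m0)
    [SigmaFinite (μ.trim hm)] {f g : Ω → ℝ} (hg : StronglyMeasurable[m] g)
    (hgf : Integrable (fun ω => g ω * f ω) μ) (hf : Integrable f μ) (hcond : μ[f | m] =ᵐ[μ] 0) :
    ∫ ω, g ω * f ω ∂μ = 0 := by
  change ∫ ω, (g * f) ω ∂μ = 0
  rw [← integral_condExp hm, integral_eq_zero_of_ae]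
  filter_upwards [condExp_mul_of_stronglyMeasurable_left hg hgf hf, hcond] with ω h1 h2
  simp [h1, h2]

variable [IsProbabilityMeasure μ] (ℱ : Filtration ℕ m0) {f : ℕ → Ω → ℝ} {c : ℕ → ℝ}

theorem integral_sq_sum_le_of_condExp_eq_zero (hf : ∀ k, StronglyMeasurable[ℱ (k + 1)] (f k))
    (hfc : ∀ k ω, |f k ω| ≤ c k) (hcond : ∀ k, μ[f k | ℱ k] =ᵐ[μ] 0) (n : ℕ) :
    ∫ ω, (∑ k ∈ range n, f k ω) ^ 2 ∂μ ≤ ∑ k ∈ range n, c k ^ 2 := by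
  induction n with
  | zero => simp
  | succ n ih =>
    set M := fun ω => ∑ k ∈ range n, f k ω
    have hM : StronglyMeasurable[ℱ n] M :=
      Finset.stronglyMeasurable_fun_sum _ fun k hk => (hf k).mono (ℱ.mono (mem_range.1 hk))
    have hMc : ∀ ω, |M ω| ≤ ∑ k ∈ range n, c k := fun ω =>
      (abs_sum_le_sum_abs _ _).trans (sum_le_sum fun k _ => hfc k ω)
    have hMf : Integrable (fun ω => M ω * f n ω) μ :=
      integrable_of_abs_le (ℱ.le _) ((hM.mono (ℱ.mono n.le_succ)).mul (hf n)) fun ω => by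
        rw [abs_mul]
        exact mul_le_mul (hMc ω) (hfc n ω) (abs_nonneg _) ((abs_nonneg _).trans (hMc ω))
    have hM2 : Integrable (fun ω => M ω ^ 2) μ :=
      integrable_of_abs_le (ℱ.le n) (hM.pow 2) fun ω => by
        rw [abs_pow]; exact pow_le_pow_left₀ (abs_nonneg _) (hMc ω) 2
    have hf2 : Integrable (fun ω => f n ω ^ 2) μ :=
      integrable_of_abs_le (ℱ.le _) ((hf n).pow 2) fun ω => by
        rw [abs_pow]; exact pow_le_pow_left₀ (abs_nonneg _) (hfc n ω) 2
    have horth : ∫ ω, M ω * f n ω ∂μ = 0 := integral_mul_eq_zero_of_condExp_eq_zero (ℱ.le n) hM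
      hMf (integrable_of_abs_le (ℱ.le _) (hf n) (hfc n)) (hcond n)
    have hf2le : ∫ ω, f n ω ^ 2 ∂μ ≤ c n ^ 2 :=
      calc ∫ ω, f n ω ^ 2 ∂μ ≤ ∫ _, c n ^ 2 ∂μ :=
            integral_mono hf2 (integrable_const _) fun ω => by
              rw [← sq_abs]; exact pow_le_pow_left₀ (abs_nonneg _) (hfc n ω) 2
        _ = c n ^ 2 := by simp
    have hexpand : ∫ ω, (∑ k ∈ range (n + 1), f k ω) ^ 2 ∂μ =
        ∫ ω, M ω ^ 2 ∂μ + 2 * ∫ ω, M ω * f n ω ∂μ + ∫ ω, f n ω ^ 2 ∂μ := by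
      have hsq : ∀ ω, (∑ k ∈ range (n + 1), f k ω) ^ 2 =
          (M ω ^ 2 + 2 * (M ω * f n ω)) + f n ω ^ 2 := fun ω => by
        simp only [M, sum_range_succ]; ring
      simp_rw [hsq]
      rw [integral_add (f := fun ω => M ω ^ 2 + 2 * (M ω * f n ω)) (hM2.add (hMf.const_mul 2))
        hf2, integral_add hM2 (hMf.const_mul 2), integral_const_mul]
    rw [hexpand, horth, sum_range_succ]
    linarith

/-- A martingale with square-summable increments is bounded in `L²`, hence in `L¹`, so it
converges almost surely. -/
theorem ae_exists_tendsto_sum_of_condExp_eq_zero (hc : Summable fun k => c k ^ 2)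
    (hf : ∀ k, StronglyMeasurable[ℱ (k + 1)] (f k))
    (hfc : ∀ k ω, |f k ω| ≤ c k) (hcond : ∀ k, μ[f k | ℱ k] =ᵐ[μ] 0) :
    ∀ᵐ ω ∂μ, ∃ l, Tendsto (fun n => ∑ k ∈ range n, f k ω) atTop (𝓝 l) := by
  set M : ℕ → Ω → ℝ := fun n ω => ∑ k ∈ range n, f k ω
  have hadapt : StronglyAdapted ℱ M := fun n =>
    Finset.stronglyMeasurable_fun_sum _ fun k hk => (hf k).mono (ℱ.mono (mem_range.1 hk))
  have hMc : ∀ n ω, |M n ω| ≤ ∑ k ∈ range n, c k := fun n ω =>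
    (abs_sum_le_sum_abs _ _).trans (sum_le_sum fun k _ => hfc k ω)
  have hMint : ∀ n, Integrable (M n) μ := fun n => integrable_of_abs_le (ℱ.le n) (hadapt n) (hMc n)
  have hmart : Martingale M ℱ μ := by
    refine martingale_of_condExp_sub_eq_zero_nat hadapt hMint fun n => ?_
    have hinc : M (n + 1) - M n = f n := by ext ω; simp [M, sum_range_succ]
    rw [hinc]; exact hcond n
  have hL1 : ∀ n, eLpNorm (M n) 1 μ ≤ ENNReal.ofReal ((∑' k, c k ^ 2 + 1) / 2) := by
    intro n
    have hM2 : Integrable (fun ω => M n ω ^ 2) μ :=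
      integrable_of_abs_le (ℱ.le n) ((hadapt n).pow 2) fun ω => by
        rw [abs_pow]; exact pow_le_pow_left₀ (abs_nonneg _) (hMc n ω) 2
    have hsq := (integral_sq_sum_le_of_condExp_eq_zero ℱ hf hfc hcond n).trans
      (hc.sum_le_tsum _ fun k _ => sq_nonneg _)
    rw [eLpNorm_one_eq_lintegral_enorm, ← ofReal_integral_norm_eq_lintegral_enorm (hMint n)]
    refine ENNReal.ofReal_le_ofReal ?_
    calc ∫ ω, ‖M n ω‖ ∂μ ≤ ∫ ω, (M n ω ^ 2 + 1) / 2 ∂μ :=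
          integral_mono (hMint n).norm ((hM2.add (integrable_const 1)).div_const 2) fun ω => by
            rw [Real.norm_eq_abs]; nlinarith [sq_nonneg (|M n ω| - 1), sq_abs (M n ω)]
      _ = (∫ ω, M n ω ^ 2 ∂μ + 1) / 2 := by
          rw [integral_div, integral_add hM2 (integrable_const 1)]; simp
      _ ≤ _ := by linarith
  exact hmart.submartingale.exists_ae_tendsto_of_bdd (R := Real.toNNReal _) hL1

end Martingale

section Sampling

variable {Ω E : Type*} {m0 : MeasurableSpace Ω} [MeasurableSpace E] {μ : Measure Ω}

def pastFiltration (X : ℕ → Ω → E) (hX : ∀ k, Measurable (X k)) : Filtration ℕ m0 where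
  seq n := ⨆ k < n, MeasurableSpace.comap (X k) inferInstance
  mono' i _ hij := biSup_mono fun k (hk : k < i) => hk.trans_le hij
  le' _ := iSup₂_le fun k _ => (hX k).comap_le

variable {X : ℕ → Ω → E} {hX : ∀ k, Measurable (X k)}

theorem comap_le_pastFiltration {k n : ℕ} (hkn : k < n) :
    MeasurableSpace.comap (X k) inferInstance ≤ pastFiltration X hX n :=
  le_biSup (fun k => MeasurableSpace.comap (X k) inferInstance) hkn

theorem indep_comap_pastFiltration (hind : iIndepFun X μ) (n : ℕ) :
    Indep (MeasurableSpace.comap (X n) inferInstance) (pastFiltration X hX n) μ := by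
  have h := indep_iSup_of_disjoint (fun k => (hX k).comap_le) hind
    (S := {n}) (T := {k | k < n}) (by simp)
  simp only [Set.mem_singleton_iff, iSup_iSup_eq_left, Set.mem_ofPred_eq] at h
  exact h

theorem measurable_comp_pastFiltration [Countable E] [MeasurableSingletonClass E]
    {β : Type*} [MeasurableSpace β] {n : ℕ} {G : Ω → E → β}
    (hG : ∀ x, Measurable[pastFiltration X hX n] fun ω => G ω x) :
    Measurable[pastFiltration X hX (n + 1)] fun ω => G ω (X n ω) := by
  have hprod : Measurable[(pastFiltration X hX n).prod inferInstance] fun p : Ω × E => G p.1 p.2 :=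
    measurable_from_prod_countable_left hG
  refine hprod.comp (Measurable.prodMk ?_ ?_)
  · exact measurable_id.mono ((pastFiltration X hX).mono n.le_succ) le_rfl
  · exact Measurable.of_comap_le (comap_le_pastFiltration n.lt_succ_self)

theorem condExp_comp_pastFiltration [Fintype E] [MeasurableSingletonClass E]
    [IsProbabilityMeasure μ] (hind : iIndepFun X μ) {n : ℕ} {G : Ω → E → ℝ}
    (hG : ∀ x, Measurable[pastFiltration X hX n] fun ω => G ω x) {C : ℝ}
    (hGC : ∀ ω x, |G ω x| ≤ C) :
    μ[fun ω => G ω (X n ω) | pastFiltration X hX n] =ᵐ[μ]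
      fun ω => ∑ x, μ.real (X n ⁻¹' {x}) * G ω x := by
  set ℱ := pastFiltration X hX
  set χ : E → Ω → ℝ := fun x => (X n ⁻¹' {x}).indicator 1
  have hχ_meas : ∀ x, StronglyMeasurable[MeasurableSpace.comap (X n) inferInstance] (χ x) :=
    fun x => (measurable_const.indicator
      (comap_measurable (X n) (measurableSet_singleton x))).stronglyMeasurable
  have hχ_int : ∀ x, Integrable (χ x) μ := fun x =>
    (integrable_const 1).indicator (hX n (measurableSet_singleton x))
  have hGχ_int : ∀ x, Integrable (fun ω => G ω x * χ x ω) μ := fun x =>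
    (hχ_int x).bdd_mul ((hG x).mono (ℱ.le n) le_rfl).aestronglyMeasurable
      (ae_of_all _ fun ω => (Real.norm_eq_abs _).trans_le (hGC ω x))
  have hdecomp : (fun ω => G ω (X n ω)) = ∑ x, fun ω => G ω x * χ x ω := by
    ext ω
    rw [Finset.sum_apply, Finset.sum_eq_single (X n ω) (fun x _ hx => by simp [χ, Ne.symm hx])
      (by simp)]
    simp [χ]
  have hterm : ∀ x, μ[fun ω => G ω x * χ x ω | ℱ n] =ᵐ[μ]
      fun ω => μ.real (X n ⁻¹' {x}) * G ω x := by
    intro x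
    have hind_x : μ[χ x | ℱ n] =ᵐ[μ] fun _ => μ.real (X n ⁻¹' {x}) := by
      refine (condExp_indep_eq (hX n).comap_le (ℱ.le n) (hχ_meas x)
        (indep_comap_pastFiltration hind n)).trans (ae_of_all _ fun _ => ?_)
      exact integral_indicator_one (hX n (measurableSet_singleton x))
    filter_upwards [condExp_mul_of_stronglyMeasurable_left (hG x).stronglyMeasurable
      (hGχ_int x) (hχ_int x), hind_x] with ω h1 h2
    change μ[(fun ω => G ω x) * χ x | ℱ n] ω = _
    rw [h1, Pi.mul_apply, h2, mul_comm]
  rw [hdecomp]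
  filter_upwards [condExp_finsetSum (fun x _ => hGχ_int x) (ℱ n), ae_all_iff.2 hterm]
    with ω h1 h2
  rw [h1, Finset.sum_apply]
  exact sum_congr rfl fun x _ => h2 x

theorem ae_exists_tendsto_sum_mul_sub_mean [Fintype E] [MeasurableSingletonClass E]
    [IsProbabilityMeasure μ] (hind : iIndepFun X μ) {α : ℕ → ℝ} (hα : Summable fun k => α k ^ 2)
    {G : ℕ → Ω → E → ℝ} (hG : ∀ k x, Measurable[pastFiltration X hX k] fun ω => G k ω x)
    {C : ℝ} (hGC : ∀ k ω x, |G k ω x| ≤ C) :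
    ∀ᵐ ω ∂μ, ∃ l, Tendsto (fun n => ∑ k ∈ range n,
      α k * (G k ω (X k ω) - ∑ x, μ.real (X k ⁻¹' {x}) * G k ω x)) atTop (𝓝 l) := by
  set ℱ := pastFiltration X hX
  set mean : ℕ → Ω → ℝ := fun k ω => ∑ x, μ.real (X k ⁻¹' {x}) * G k ω x
  have hmean_meas : ∀ k, Measurable[ℱ k] (mean k) := fun k =>
    Finset.measurable_sum _ fun x _ => (hG k x).const_mul _
  have hmean_le : ∀ k ω, |mean k ω| ≤ C := fun k ω =>
    calc |mean k ω| ≤ ∑ x, μ.real (X k ⁻¹' {x}) * C :=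
          (abs_sum_le_sum_abs _ _).trans <| sum_le_sum fun x _ => by
            rw [abs_mul, abs_of_nonneg measureReal_nonneg]
            exact mul_le_mul_of_nonneg_left (hGC k ω x) measureReal_nonneg
      _ = C := by
          rw [← sum_mul, sum_measureReal_preimage_singleton _
            fun x _ => hX k (measurableSet_singleton x)]
          simp
  have hGX_meas : ∀ k, Measurable[ℱ (k + 1)] fun ω => G k ω (X k ω) := fun k =>
    measurable_comp_pastFiltration (hG k)
  refine ae_exists_tendsto_sum_of_condExp_eq_zero ℱ (c := fun k => |α k| * (2 * C))
    ((hα.mul_right ((2 * C) ^ 2)).congr fun k => by rw [mul_pow |α k|, sq_abs]) (fun k => ?_)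
    (fun k ω => ?_) (fun k => ?_)
  · exact (((hGX_meas k).sub ((hmean_meas k).mono (ℱ.mono k.le_succ) le_rfl)).const_mul
      (α k)).stronglyMeasurable
  · rw [abs_mul]
    have h := abs_sub (G k ω (X k ω)) (mean k ω)
    exact mul_le_mul_of_nonneg_left (by linarith [hGC k ω (X k ω), hmean_le k ω]) (abs_nonneg _)
  · have hGX_int : Integrable (fun ω => G k ω (X k ω)) μ :=
      integrable_of_abs_le (ℱ.le _) (hGX_meas k).stronglyMeasurable fun ω => hGC k ω (X k ω)
    have hmean_int : Integrable (mean k) μ :=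
      integrable_of_abs_le (ℱ.le _) (hmean_meas k).stronglyMeasurable (hmean_le k)
    filter_upwards [condExp_smul (α k) ((fun ω => G k ω (X k ω)) - mean k) (ℱ k),
      condExp_sub hGX_int hmean_int (ℱ k), condExp_comp_pastFiltration hind (hG k) (hGC k)]
      with ω h1 h2 h3
    change μ[α k • ((fun ω => G k ω (X k ω)) - mean k) | ℱ k] ω = 0
    rw [h1, Pi.smul_apply, h2, Pi.sub_apply, h3, condExp_of_stronglyMeasurable (ℱ.le k)
      (hmean_meas k).stronglyMeasurable hmean_int]
    simp [mean]

end Sampling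

section Bellman

variable {S A : Type*} [Fintype S] [Fintype A]

theorem abs_apply_le_norm (Q : S → A → ℝ) (s : S) (a : A) : |Q s a| ≤ ‖Q‖ :=
  (Real.norm_eq_abs _).symm.trans_le ((norm_le_pi_norm (Q s) a).trans (norm_le_pi_norm Q s))

theorem norm_le_of_forall_abs_apply_le {Q : S → A → ℝ} {C : ℝ} (hC : 0 ≤ C)
    (h : ∀ s a, |Q s a| ≤ C) : ‖Q‖ ≤ C :=
  (pi_norm_le_iff_of_nonneg hC).2 fun s => (pi_norm_le_iff_of_nonneg hC).2 fun a =>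
    (Real.norm_eq_abs _).trans_le (h s a)

theorem abs_apply₃_le_norm (r : S → A → S → ℝ) (s : S) (a : A) (s' : S) : |r s a s'| ≤ ‖r‖ :=
  (abs_apply_le_norm (r s) a s').trans (norm_le_pi_norm r s)

variable [Nonempty A]

theorem abs_maxQ_sub_maxQ_le (Q Q' : S → A → ℝ) (s : S) :
    |maxQ Q s - maxQ Q' s| ≤ ‖Q - Q'‖ := by
  have key : ∀ Q Q' : S → A → ℝ, maxQ Q s ≤ maxQ Q' s + ‖Q - Q'‖ := fun Q Q' =>
    sup'_le _ _ fun a _ => by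
      have h1 := abs_apply_le_norm (Q - Q') s a
      have h2 : Q' s a ≤ maxQ Q' s := le_sup' (fun a => Q' s a) (mem_univ a)
      rw [Pi.sub_apply, Pi.sub_apply] at h1
      linarith [le_abs_self (Q s a - Q' s a)]
  rw [abs_sub_le_iff, norm_sub_rev Q Q']
  exact ⟨by linarith [key Q Q', norm_sub_rev Q Q'], by linarith [key Q' Q]⟩

theorem abs_maxQ_le_norm (Q : S → A → ℝ) (s : S) : |maxQ Q s| ≤ ‖Q‖ := by
  simpa [maxQ] using abs_maxQ_sub_maxQ_le Q 0 s

omit [Fintype S] in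
@[fun_prop]
theorem Continuous.maxQ {X : Type*} [TopologicalSpace X] {f : X → S → A → ℝ} (hf : Continuous f)
    (s : S) : Continuous fun t => maxQ (f t) s :=
  Continuous.finset_sup'_apply _ fun a _ => by fun_prop

variable {P r : S → A → S → ℝ} {γ : ℝ}

theorem abs_bellmanT_sub_bellmanT_le (hγ : 0 ≤ γ) (hP0 : ∀ s a s', 0 ≤ P s a s')
    (hP1 : ∀ s a, ∑ s', P s a s' = 1) (Q Q' : S → A → ℝ) (s : S) (a : A) :
    |bellmanT P r γ Q s a - bellmanT P r γ Q' s a| ≤ γ * ‖Q - Q'‖ :=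
  calc |bellmanT P r γ Q s a - bellmanT P r γ Q' s a|
      = |∑ s', P s a s' * (γ * (maxQ Q s' - maxQ Q' s'))| := by
        simp only [bellmanT, ← sum_sub_distrib]; congr 1; exact sum_congr rfl fun _ _ => by ring
    _ ≤ ∑ s', P s a s' * (γ * ‖Q - Q'‖) := (abs_sum_le_sum_abs _ _).trans <|
        sum_le_sum fun s' _ => by
          rw [abs_mul, abs_mul, abs_of_nonneg (hP0 s a s'), abs_of_nonneg hγ]
          gcongr
          · exact hP0 s a s'
          · exact abs_maxQ_sub_maxQ_le Q Q' s'
    _ = γ * ‖Q - Q'‖ := by rw [← sum_mul, hP1, one_mul]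

theorem abs_bellmanT_le (hγ : 0 ≤ γ) (hP0 : ∀ s a s', 0 ≤ P s a s')
    (hP1 : ∀ s a, ∑ s', P s a s' = 1) (Q : S → A → ℝ) (s : S) (a : A) :
    |bellmanT P r γ Q s a| ≤ ‖r‖ + γ * ‖Q‖ :=
  calc |bellmanT P r γ Q s a| ≤ ∑ s', P s a s' * (‖r‖ + γ * ‖Q‖) :=
        (abs_sum_le_sum_abs _ _).trans <| sum_le_sum fun s' _ => by
          rw [abs_mul, abs_of_nonneg (hP0 s a s')]
          refine mul_le_mul_of_nonneg_left ((abs_add_le _ _).trans ?_) (hP0 s a s')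
          rw [abs_mul, abs_of_nonneg hγ]
          gcongr
          · exact abs_apply₃_le_norm r s a s'
          · exact abs_maxQ_le_norm Q s'
    _ = ‖r‖ + γ * ‖Q‖ := by rw [← sum_mul, hP1, one_mul]

@[fun_prop]
theorem Continuous.bellmanT {X : Type*} [TopologicalSpace X] {f : X → S → A → ℝ}
    (hf : Continuous f) (s : S) (a : A) : Continuous fun t => bellmanT P r γ (f t) s a := by
  unfold _root_.bellmanT; fun_prop

end Bellman

section SGT2

variable {S A : Type*} [DecidableEq S] [DecidableEq A]

def visit (x : S × A × S) (s : S) (a : A) : ℝ := if s = x.1 ∧ a = x.2.1 then 1 else 0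

theorem visit_nonneg (x : S × A × S) (s : S) (a : A) : 0 ≤ visit x s a := by
  unfold visit; split_ifs <;> norm_num

theorem visit_le_one (x : S × A × S) (s : S) (a : A) : visit x s a ≤ 1 := by
  unfold visit; split_ifs <;> norm_num

variable [Fintype S] [Fintype A] [Nonempty A]

noncomputable def bellmanNoise (P r : S → A → S → ℝ) (γ : ℝ) (Q : S → A → ℝ) (x : S × A × S)
    (s : S) (a : A) : ℝ :=
  visit x s a * (r s a x.2.2 + γ * maxQ Q x.2.2 - bellmanT P r γ Q s a)

noncomputable def sgtStep (r : S → A → S → ℝ) (γ β α : ℝ) (x : S × A × S) (Q Q' : S → A → ℝ) :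
    S → A → ℝ :=
  fun s a => Q s a + α * (if s = x.1 ∧ a = x.2.1 then
    r x.1 x.2.1 x.2.2 + γ * maxQ Q' x.2.2 - Q x.1 x.2.1 + β * (Q' x.1 x.2.1 - Q x.1 x.2.1)
    else 0)

noncomputable def sgtPairStep (r : S → A → S → ℝ) (γ β α : ℝ) (x : S × A × S)
    (Z : Bool → S → A → ℝ) : Bool → S → A → ℝ :=
  fun b => sgtStep r γ β α x (Z b) (Z !b)

variable {r : S → A → S → ℝ} {γ β α : ℝ}

omit [Fintype S] in
theorem sgtStep_apply (x : S × A × S) (Q Q' : S → A → ℝ) (s : S) (a : A) :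
    sgtStep r γ β α x Q Q' s a = Q s a + α * visit x s a *
      (r s a x.2.2 + γ * maxQ Q' x.2.2 - Q s a + β * (Q' s a - Q s a)) := by
  unfold sgtStep visit
  split_ifs with h
  · obtain ⟨rfl, rfl⟩ := h; ring
  · ring

theorem abs_sgtStep_le (hα : 0 ≤ α) (hβ : 0 ≤ β) (hγ : 0 ≤ γ) (x : S × A × S)
    {Q Q' : S → A → ℝ} {m : ℝ} (hQ : ‖Q‖ ≤ m) (hQ' : ‖Q'‖ ≤ m) (s : S) (a : A) :
    |sgtStep r γ β α x Q Q' s a| ≤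
      |1 - (1 + β) * (α * visit x s a)| * m + α * visit x s a * (‖r‖ + (γ + β) * m) := by
  have ht : 0 ≤ α * visit x s a := mul_nonneg hα (visit_nonneg x s a)
  have hid : sgtStep r γ β α x Q Q' s a = (1 - (1 + β) * (α * visit x s a)) * Q s a +
      α * visit x s a * (r s a x.2.2 + γ * maxQ Q' x.2.2 + β * Q' s a) := by
    rw [sgtStep_apply]; ring
  have hr := abs_apply₃_le_norm r s a x.2.2
  have hM := abs_maxQ_le_norm Q' x.2.2
  have hQsa := (abs_apply_le_norm Q s a).trans hQ
  have hQ'sa := (abs_apply_le_norm Q' s a).trans hQ'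
  rw [hid]
  refine (abs_add_le _ _).trans (add_le_add ?_ ?_)
  · rw [abs_mul]; exact mul_le_mul_of_nonneg_left hQsa (abs_nonneg _)
  · rw [abs_mul, abs_of_nonneg ht]
    refine mul_le_mul_of_nonneg_left ?_ ht
    calc _ ≤ |r s a x.2.2| + |γ * maxQ Q' x.2.2| + |β * Q' s a| :=
          (abs_add_le _ _).trans (add_le_add_left (abs_add_le _ _) _)
      _ ≤ ‖r‖ + γ * m + β * m := by
          rw [abs_mul, abs_mul, abs_of_nonneg hγ, abs_of_nonneg hβ]
          gcongr
          exact hM.trans hQ'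
      _ = _ := by ring

theorem norm_sgtPairStep_le_mul_add (hα0 : 0 ≤ α) (hα1 : α ≤ 1) (hβ : 0 ≤ β) (hγ : 0 ≤ γ)
    (x : S × A × S) {Z : Bool → S → A → ℝ} {m : ℝ} (hZ : ‖Z‖ ≤ m) :
    ‖sgtPairStep r γ β α x Z‖ ≤ (1 + 2 * β + γ) * m + ‖r‖ := by
  have hm : 0 ≤ m := (norm_nonneg _).trans hZ
  have hC : 0 ≤ (1 + 2 * β + γ) * m + ‖r‖ := by positivity
  refine (pi_norm_le_iff_of_nonneg hC).2 fun b => norm_le_of_forall_abs_apply_le hC fun s a => ?_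
  have h := abs_sgtStep_le (r := r) hα0 hβ hγ x ((norm_le_pi_norm Z b).trans hZ)
    ((norm_le_pi_norm Z !b).trans hZ) s a
  have ht0 : 0 ≤ α * visit x s a := mul_nonneg hα0 (visit_nonneg x s a)
  have ht1 : α * visit x s a ≤ 1 := mul_le_one₀ hα1 (visit_nonneg x s a) (visit_le_one x s a)
  have hcoef : |1 - (1 + β) * (α * visit x s a)| ≤ 1 + β := by
    rw [abs_le]; constructor <;> nlinarith
  refine h.trans ?_
  nlinarith [mul_le_mul_of_nonneg_right hcoef hm, norm_nonneg r,
    mul_le_mul_of_nonneg_right ht1 (by positivity : 0 ≤ ‖r‖ + (γ + β) * m)]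

theorem norm_sgtPairStep_le_max (hα0 : 0 ≤ α) (hαβ : (1 + β) * α ≤ 1) (hβ : 0 ≤ β) (hγ0 : 0 ≤ γ)
    (hγ1 : γ < 1) (x : S × A × S) {Z : Bool → S → A → ℝ} {m : ℝ} (hZ : ‖Z‖ ≤ m) :
    ‖sgtPairStep r γ β α x Z‖ ≤ max m (‖r‖ / (1 - γ)) := by
  have hm : 0 ≤ m := (norm_nonneg _).trans hZ
  have hC : 0 ≤ max m (‖r‖ / (1 - γ)) := hm.trans (le_max_left _ _)
  refine (pi_norm_le_iff_of_nonneg hC).2 fun b => norm_le_of_forall_abs_apply_le hC fun s a => ?_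
  have h := abs_sgtStep_le (r := r) hα0 hβ hγ0 x ((norm_le_pi_norm Z b).trans hZ)
    ((norm_le_pi_norm Z !b).trans hZ) s a
  set t := α * visit x s a
  have ht0 : 0 ≤ t := mul_nonneg hα0 (visit_nonneg x s a)
  have hβt : (1 + β) * t ≤ 1 :=
    (mul_le_mul_of_nonneg_left (mul_le_of_le_one_right hα0 (visit_le_one x s a))
      (by positivity)).trans hαβ
  have ht1 : t ≤ 1 := by nlinarith
  rw [abs_of_nonneg (by linarith : 0 ≤ 1 - (1 + β) * t)] at h
  -- the entry is `m + t (‖r‖ - (1 - γ) m)`, which moves towards `‖r‖ / (1 - γ)`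
  rcases le_total (‖r‖ / (1 - γ)) m with hle | hle
  · rw [div_le_iff₀ (by linarith)] at hle
    exact h.trans (le_max_of_le_left (by nlinarith))
  · refine h.trans (le_max_of_le_right ?_)
    rw [le_div_iff₀ (by linarith)] at hle ⊢
    nlinarith [mul_nonneg (sub_nonneg.2 ht1) (sub_nonneg.2 hle),
      mul_nonneg (mul_nonneg ht0 hγ0) (sub_nonneg.2 hle)]

theorem exists_forall_le_of_le_mul_add_of_le_max {ι : Type*} {m : ℕ → ι → ℝ} {m₀ c R C : ℝ}
    {K : ℕ} (hc : 0 ≤ c) (h0 : ∀ j, m 0 j ≤ m₀) (hgrow : ∀ k j, m (k + 1) j ≤ c * m k j + R)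
    (hstable : ∀ k j, K ≤ k → m (k + 1) j ≤ max (m k j) C) : ∃ B, ∀ k j, m k j ≤ B := by
  have hinit : ∀ n, ∃ B, ∀ k j, k ≤ n → m k j ≤ B := by
    intro n
    induction n with
    | zero => exact ⟨m₀, fun k j hk => by rw [Nat.le_zero.1 hk]; exact h0 j⟩
    | succ n ih =>
      obtain ⟨B, hB⟩ := ih
      refine ⟨max B (c * B + R), fun k j hk => ?_⟩
      rcases Nat.of_le_succ hk with hk | rfl
      · exact (hB k j hk).trans (le_max_left _ _)
      · exact (hgrow n j).trans (le_max_of_le_right (by gcongr; exact hB n j le_rfl))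
  obtain ⟨B, hB⟩ := hinit K
  refine ⟨max B C, fun k j => ?_⟩
  rcases le_total k K with hk | hk
  · exact (hB k j hk).trans (le_max_left _ _)
  · induction k, hk using Nat.le_induction with
    | base => exact (hB K j le_rfl).trans (le_max_left _ _)
    | succ k hk ih => exact (hstable k j hk).trans (max_le ih (le_max_right _ _))

theorem exists_forall_norm_le_of_sgtPairStep {ι : Type*} {α : ℕ → ℝ}
    {Z : ℕ → ι → Bool → S → A → ℝ} {x : ℕ → ι → S × A × S} {Z₀ : Bool → S → A → ℝ}
    (hα : ∀ k, 0 ≤ α k ∧ α k ≤ 1) (hαβ : ∀ᶠ k in atTop, (1 + β) * α k ≤ 1) (hβ : 0 ≤ β)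
    (hγ0 : 0 ≤ γ) (hγ1 : γ < 1) (hZ₀ : ∀ j, Z 0 j = Z₀)
    (hZ : ∀ k j, Z (k + 1) j = sgtPairStep r γ β (α k) (x k j) (Z k j)) :
    ∃ B, ∀ k j, ‖Z k j‖ ≤ B := by
  obtain ⟨K, hK⟩ := eventually_atTop.1 hαβ
  refine exists_forall_le_of_le_mul_add_of_le_max (m := fun k j => ‖Z k j‖) (m₀ := ‖Z₀‖)
    (R := ‖r‖) (C := ‖r‖ / (1 - γ)) (by positivity : 0 ≤ 1 + 2 * β + γ) (K := K)
    (fun j => by rw [hZ₀ j]) (fun k j => ?_) (fun k j hk => ?_)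
  · rw [hZ]; exact norm_sgtPairStep_le_mul_add (hα k).1 (hα k).2 hβ hγ0 _ le_rfl
  · rw [hZ]; exact norm_sgtPairStep_le_max (hα k).1 (hK k hk) hβ hγ0 hγ1 _ le_rfl

variable {P : S → A → S → ℝ} {Qstar : S → A → ℝ}

theorem abs_sgtStep_sub_le (hγ : 0 ≤ γ) (hβ : 0 ≤ β) (hα : 0 ≤ α)
    (hP0 : ∀ s a s', 0 ≤ P s a s') (hP1 : ∀ s a, ∑ s', P s a s' = 1)
    (hQstar : bellmanT P r γ Qstar = Qstar) (x : S × A × S) (Q Q' : S → A → ℝ) (s : S) (a : A) :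
    |sgtStep r γ β α x Q Q' s a - Qstar s a - (1 - (1 + β) * α * visit x s a) * (Q s a - Qstar s a)
      - α * bellmanNoise P r γ Q' x s a| ≤
      (1 + β) * α * visit x s a * ((γ + β) / (1 + β)) * ‖Q' - Qstar‖ := by
  have ht : 0 ≤ α * visit x s a := mul_nonneg hα (visit_nonneg x s a)
  have hfix : bellmanT P r γ Qstar s a = Qstar s a := congrFun (congrFun hQstar s) a
  have hid : sgtStep r γ β α x Q Q' s a - Qstar s a
      - (1 - (1 + β) * α * visit x s a) * (Q s a - Qstar s a) - α * bellmanNoise P r γ Q' x s a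
      = α * visit x s a * ((bellmanT P r γ Q' s a - bellmanT P r γ Qstar s a)
        + β * (Q' s a - Qstar s a)) := by
    rw [sgtStep_apply, bellmanNoise, hfix]; ring
  have hT := abs_bellmanT_sub_bellmanT_le (r := r) hγ hP0 hP1 Q' Qstar s a
  have hQ' : |Q' s a - Qstar s a| ≤ ‖Q' - Qstar‖ := abs_apply_le_norm (Q' - Qstar) s a
  rw [hid, abs_mul, abs_of_nonneg ht]
  calc α * visit x s a * |_ + _| ≤ α * visit x s a * (γ * ‖Q' - Qstar‖ + β * ‖Q' - Qstar‖) := by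
        refine mul_le_mul_of_nonneg_left ((abs_add_le _ _).trans (add_le_add hT ?_)) ht
        rw [abs_mul, abs_of_nonneg hβ]; gcongr
    _ = _ := by field_simp

theorem tendsto_of_sgtPairStep {Z : ℕ → Bool → S → A → ℝ} {x : ℕ → S × A × S} {α : ℕ → ℝ}
    {B : ℝ} (hγ0 : 0 ≤ γ) (hγ1 : γ < 1) (hβ : 0 ≤ β) (hP0 : ∀ s a s', 0 ≤ P s a s')
    (hP1 : ∀ s a, ∑ s', P s a s' = 1) (hQstar : bellmanT P r γ Qstar = Qstar)
    (hα : ∀ k, 0 ≤ α k) (hαβ : ∀ᶠ k in atTop, (1 + β) * α k ≤ 1)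
    (hZ : ∀ k, Z (k + 1) = sgtPairStep r γ β (α k) (x k) (Z k)) (hB : ∀ k, ‖Z k‖ ≤ B)
    (hvisit : ∀ s a, Tendsto (fun n => ∑ k ∈ range n, α k * visit (x k) s a) atTop atTop)
    (hnoise : ∀ b s a, ∃ l, Tendsto (fun n => ∑ k ∈ range n,
      α k * bellmanNoise P r γ (Z k b) (x k) s a) atTop (𝓝 l)) (b : Bool) (s : S) (a : A) :
    Tendsto (fun k => Z k b s a) atTop (𝓝 (Qstar s a)) := by
  set e : ℕ → Bool × S × A → ℝ := fun k i => Z k i.1 i.2.1 i.2.2 - Qstar i.2.1 i.2.2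
  have he_norm : ∀ k b, ‖Z k b - Qstar‖ ≤ ‖e k‖ := fun k b =>
    norm_le_of_forall_abs_apply_le (norm_nonneg _) fun s a =>
      (Real.norm_eq_abs _).symm.trans_le (norm_le_pi_norm (e k) (b, s, a))
  have hκ0 : 0 ≤ (γ + β) / (1 + β) := by positivity
  have hκ1 : (γ + β) / (1 + β) < 1 := by rw [div_lt_one (by positivity)]; linarith
  have he : Tendsto e atTop (𝓝 0) := by
    refine tendsto_zero_of_abs_sub_le_mul_norm (D := B + ‖Qstar‖)
      (b := fun k i => (1 + β) * α k * visit (x k) i.2.1 i.2.2)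
      (u := fun k i => α k * bellmanNoise P r γ (Z k !i.1) (x k) i.2.1 i.2.2) hκ0 hκ1
      (fun k => ?_) (fun i => ?_) (fun i => ?_) (fun i => hnoise (!i.1) i.2.1 i.2.2)
      (fun i => .of_forall fun k => ?_)
    · have hD0 : 0 ≤ B + ‖Qstar‖ := by linarith [(norm_nonneg _).trans (hB k), norm_nonneg Qstar]
      refine (pi_norm_le_iff_of_nonneg hD0).2 fun i => ?_
      have hZi := (abs_apply_le_norm (Z k i.1) i.2.1 i.2.2).trans
        ((norm_le_pi_norm (Z k) i.1).trans (hB k))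
      rw [Real.norm_eq_abs]
      exact (abs_sub _ _).trans (add_le_add hZi (abs_apply_le_norm Qstar _ _))
    · filter_upwards [hαβ] with k hk
      have hv0 := visit_nonneg (x k) i.2.1 i.2.2
      have hv1 := visit_le_one (x k) i.2.1 i.2.2
      exact ⟨by have := hα k; positivity, by nlinarith [hα k]⟩
    · simpa only [mul_assoc, ← mul_sum] using
        (hvisit i.2.1 i.2.2).const_mul_atTop (by linarith : (0 : ℝ) < 1 + β)
    · dsimp only [e]
      rw [hZ]
      refine (abs_sgtStep_sub_le hγ0 hβ (hα k) hP0 hP1 hQstar _ _ _ _ _).trans ?_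
      have : 0 ≤ (1 + β) * α k * visit (x k) i.2.1 i.2.2 * ((γ + β) / (1 + β)) := by
        have := hα k; have := visit_nonneg (x k) i.2.1 i.2.2; positivity
      exact mul_le_mul_of_nonneg_left (he_norm k _) this
  simpa [e] using (tendsto_pi_nhds.1 he (b, s, a)).add_const (Qstar s a)

end SGT2

section SampledSGT2

variable {S A : Type*} [Fintype S] [Fintype A] [Nonempty A] [DecidableEq S] [DecidableEq A]
  {P r : S → A → S → ℝ} {γ : ℝ}

omit [Nonempty A] in
theorem sum_mul_visit_mul (d : S → A → ℝ) (g : S → ℝ) (s : S) (a : A) :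
    ∑ x : S × A × S, d x.1 x.2.1 * P x.1 x.2.1 x.2.2 * (visit x s a * g x.2.2) =
      d s a * ∑ s', P s a s' * g s' := by
  simp [visit, Fintype.sum_prod_type, ite_and, mul_sum, mul_assoc]

theorem abs_bellmanNoise_le (hγ : 0 ≤ γ) (hP0 : ∀ s a s', 0 ≤ P s a s')
    (hP1 : ∀ s a, ∑ s', P s a s' = 1) (Q : S → A → ℝ) (x : S × A × S) (s : S) (a : A) :
    |bellmanNoise P r γ Q x s a| ≤ 2 * (‖r‖ + γ * ‖Q‖) := by
  have hM := mul_le_mul_of_nonneg_left (abs_maxQ_le_norm Q x.2.2) hγ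
  have hT := abs_bellmanT_le (r := r) hγ hP0 hP1 Q s a
  rw [bellmanNoise, abs_mul, abs_of_nonneg (visit_nonneg x s a)]
  refine (mul_le_of_le_one_left (abs_nonneg _) (visit_le_one x s a)).trans ?_
  calc _ ≤ |r s a x.2.2| + γ * |maxQ Q x.2.2| + |bellmanT P r γ Q s a| := by
        refine (abs_sub _ _).trans (add_le_add_left ((abs_add_le _ _).trans ?_) _)
        rw [abs_mul, abs_of_nonneg hγ]
    _ ≤ _ := by linarith [abs_apply₃_le_norm r s a x.2.2]

theorem sum_mul_bellmanNoise (hP1 : ∀ s a, ∑ s', P s a s' = 1) (d : S → A → ℝ)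
    (Q : S → A → ℝ) (s : S) (a : A) :
    ∑ x : S × A × S, d x.1 x.2.1 * P x.1 x.2.1 x.2.2 * bellmanNoise P r γ Q x s a = 0 := by
  simp only [bellmanNoise]
  rw [sum_mul_visit_mul d (fun s' => r s a s' + γ * maxQ Q s' - bellmanT P r γ Q s a)]
  simp [mul_sub, sum_sub_distrib, ← sum_mul, hP1, bellmanT]

omit [Fintype S] in
theorem continuous_sgtPairStep (β α : ℝ) (x : S × A × S) :
    Continuous (sgtPairStep r γ β α x) := by
  refine continuous_pi fun b => continuous_pi fun s => continuous_pi fun a => ?_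
  simp only [sgtPairStep, sgtStep_apply]
  fun_prop

theorem continuous_bellmanNoise (x : S × A × S) (s : S) (a : A) :
    Continuous fun Q => bellmanNoise P r γ Q x s a := by
  unfold bellmanNoise
  fun_prop

variable [MeasurableSpace S] [MeasurableSingletonClass S] [MeasurableSpace A]
  [MeasurableSingletonClass A] {Ω : Type*} [MeasurableSpace Ω] {μ : Measure Ω}
  [IsProbabilityMeasure μ] {X : ℕ → Ω → S × A × S} {d : S → A → ℝ} {α : ℕ → ℝ}

omit [Nonempty A] in
theorem ae_tendsto_sum_visit (hX : ∀ k, Measurable (X k)) (hind : iIndepFun X μ)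
    (hlaw : ∀ k x, μ.real (X k ⁻¹' {x}) = d x.1 x.2.1 * P x.1 x.2.1 x.2.2)
    (hP1 : ∀ s a, ∑ s', P s a s' = 1) (hd : ∀ s a, 0 < d s a) (hαsq : Summable fun k => α k ^ 2)
    (hαdiv : Tendsto (fun n => ∑ k ∈ range n, α k) atTop atTop) :
    ∀ᵐ ω ∂μ, ∀ s a, Tendsto (fun n => ∑ k ∈ range n, α k * visit (X k ω) s a) atTop atTop := by
  refine ae_all_iff.2 fun s => ae_all_iff.2 fun a => ?_
  have hmean : ∀ k, ∑ x, μ.real (X k ⁻¹' {x}) * visit x s a = d s a := fun k => by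
    simpa [hlaw, hP1] using sum_mul_visit_mul (P := P) d (fun _ => 1) s a
  have h := ae_exists_tendsto_sum_mul_sub_mean (hX := hX) hind hαsq
    (G := fun _ _ x => visit x s a) (C := 1) (fun _ _ => measurable_const)
    fun _ _ x => (abs_of_nonneg (visit_nonneg x s a)).trans_le (visit_le_one x s a)
  filter_upwards [h] with ω ⟨l, hl⟩
  simp only [hmean] at hl
  have hsplit : ∀ n, ∑ k ∈ range n, α k * visit (X k ω) s a =
      d s a * ∑ k ∈ range n, α k + ∑ k ∈ range n, α k * (visit (X k ω) s a - d s a) := by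
    intro n; rw [mul_sum, ← sum_add_distrib]; exact sum_congr rfl fun k _ => by ring
  simp only [hsplit]
  exact (hαdiv.const_mul_atTop (hd s a)).atTop_add hl

theorem ae_exists_tendsto_sum_bellmanNoise (hX : ∀ k, Measurable (X k)) (hind : iIndepFun X μ)
    (hlaw : ∀ k x, μ.real (X k ⁻¹' {x}) = d x.1 x.2.1 * P x.1 x.2.1 x.2.2) (hγ : 0 ≤ γ)
    (hP0 : ∀ s a s', 0 ≤ P s a s') (hP1 : ∀ s a, ∑ s', P s a s' = 1)
    (hαsq : Summable fun k => α k ^ 2) {Y : ℕ → Ω → S → A → ℝ}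
    (hY : ∀ k, Measurable[pastFiltration X hX k] (Y k)) {B : ℝ} (hB : ∀ k ω, ‖Y k ω‖ ≤ B) :
    ∀ᵐ ω ∂μ, ∀ s a, ∃ l, Tendsto (fun n => ∑ k ∈ range n,
      α k * bellmanNoise P r γ (Y k ω) (X k ω) s a) atTop (𝓝 l) := by
  refine ae_all_iff.2 fun s => ae_all_iff.2 fun a => ?_
  have h := ae_exists_tendsto_sum_mul_sub_mean hind hαsq
    (G := fun k ω x => bellmanNoise P r γ (Y k ω) x s a) (C := 2 * (‖r‖ + γ * B))
    (fun k x => (continuous_bellmanNoise x s a).measurable.comp (hY k))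
    fun k ω x => (abs_bellmanNoise_le hγ hP0 hP1 _ x s a).trans (by gcongr; exact hB k ω)
  simpa only [hlaw, sum_mul_bellmanNoise hP1, sub_zero] using h

theorem measurable_pastFiltration_of_sgtPairStep {hX : ∀ k, Measurable (X k)} {β : ℝ}
    {Z : ℕ → Ω → Bool → S → A → ℝ} {Z₀ : Bool → S → A → ℝ} (hZ₀ : ∀ ω, Z 0 ω = Z₀)
    (hZ : ∀ k ω, Z (k + 1) ω = sgtPairStep r γ β (α k) (X k ω) (Z k ω)) (k : ℕ) :
    Measurable[pastFiltration X hX k] (Z k) := by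
  induction k with
  | zero =>
    have h0 : Z 0 = fun _ => Z₀ := funext hZ₀
    rw [h0]
    exact measurable_const
  | succ k ih =>
    have h1 : Z (k + 1) = fun ω => sgtPairStep r γ β (α k) (X k ω) (Z k ω) := funext (hZ k)
    rw [h1]
    refine measurable_comp_pastFiltration (G := fun ω x => sgtPairStep r γ β (α k) x (Z k ω))
      fun x => ?_
    exact (continuous_sgtPairStep β (α k) x).measurable.comp ih

end SampledSGT2

theorem sgt2_ql_convergence_general
    {S A : Type*} [Fintype S] [Fintype A] [Nonempty A]
    [DecidableEq S] [DecidableEq A]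
    [MeasurableSpace S] [MeasurableSingletonClass S]
    [MeasurableSpace A] [MeasurableSingletonClass A]
    (P r : S → A → S → ℝ) (γ : ℝ) (hγ0 : 0 ≤ γ) (hγ1 : γ < 1)
    (hP0 : ∀ s a s', 0 ≤ P s a s') (hP1 : ∀ s a, ∑ s', P s a s' = 1)
    (Qstar : S → A → ℝ) (hQstar : bellmanT P r γ Qstar = Qstar)
    (β : ℝ) (hβ : 0 < β)
    (α : ℕ → ℝ) (hα01 : ∀ k, 0 ≤ α k ∧ α k ≤ 1)
    (hαdiv : Tendsto (fun n => ∑ k ∈ Finset.range n, α k) atTop atTop)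
    (hαsq : Summable fun k => (α k) ^ 2)
    (d : S → A → ℝ) (hd : ∀ s a, 0 < d s a)
    {Ω : Type*} [MeasurableSpace Ω] (μ : Measure Ω) [IsProbabilityMeasure μ]
    (X : ℕ → Ω → S × A × S)
    (hXmeas : ∀ k, Measurable (X k))
    (hXindep : iIndepFun X μ)
    (hXlaw : ∀ k (s : S) (a : A) (s' : S),
      μ {ω | X k ω = (s, a, s')} = ENNReal.ofReal (d s a * P s a s'))
    (QA QB : ℕ → Ω → S → A → ℝ) (QA0 QB0 : S → A → ℝ)
    (hQA0 : ∀ ω, QA 0 ω = QA0) (hQB0 : ∀ ω, QB 0 ω = QB0)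
    (hQArec : ∀ k ω s a, QA (k + 1) ω s a = QA k ω s a +
      α k * (if s = (X k ω).1 ∧ a = (X k ω).2.1 then
          r (X k ω).1 (X k ω).2.1 (X k ω).2.2 + γ * maxQ (QB k ω) (X k ω).2.2 -
            QA k ω (X k ω).1 (X k ω).2.1 +
            β * (QB k ω (X k ω).1 (X k ω).2.1 - QA k ω (X k ω).1 (X k ω).2.1)
        else 0))
    (hQBrec : ∀ k ω s a, QB (k + 1) ω s a = QB k ω s a +
      α k * (if s = (X k ω).1 ∧ a = (X k ω).2.1 then
          r (X k ω).1 (X k ω).2.1 (X k ω).2.2 + γ * maxQ (QA k ω) (X k ω).2.2 -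
            QB k ω (X k ω).1 (X k ω).2.1 +
            β * (QA k ω (X k ω).1 (X k ω).2.1 - QB k ω (X k ω).1 (X k ω).2.1)
        else 0)) :
    ∀ᵐ ω ∂μ, ∀ s a,
      Tendsto (fun k => QA k ω s a) atTop (nhds (Qstar s a)) ∧
      Tendsto (fun k => QB k ω s a) atTop (nhds (Qstar s a)) := by
  set Z : ℕ → Ω → Bool → S → A → ℝ := fun k ω b => bif b then QA k ω else QB k ω
  have hZ₀ : ∀ ω, Z 0 ω = fun b => bif b then QA0 else QB0 := fun ω => by
    ext b; cases b <;> simp [Z, hQA0, hQB0]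
  have hZ : ∀ k ω, Z (k + 1) ω = sgtPairStep r γ β (α k) (X k ω) (Z k ω) := fun k ω => by
    ext b s a; cases b
    · exact hQBrec k ω s a
    · exact hQArec k ω s a
  have hαβ := eventually_mul_le_one_of_summable_sq hαsq (by linarith : 0 < 1 + β)
  obtain ⟨B, hB⟩ := exists_forall_norm_le_of_sgtPairStep hα01 hαβ hβ.le hγ0 hγ1 hZ₀ hZ
  have hlaw : ∀ k x, μ.real (X k ⁻¹' {x}) = d x.1 x.2.1 * P x.1 x.2.1 x.2.2 := fun k x => by
    rw [measureReal_def, ← ENNReal.toReal_ofReal (mul_nonneg (hd _ _).le (hP0 _ _ _))]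
    exact congrArg ENNReal.toReal (hXlaw k x.1 x.2.1 x.2.2)
  have hZmeas := measurable_pastFiltration_of_sgtPairStep (hX := hXmeas) hZ₀ hZ
  filter_upwards [ae_tendsto_sum_visit hXmeas hXindep hlaw hP1 hd hαsq hαdiv,
    ae_all_iff.2 fun b => ae_exists_tendsto_sum_bellmanNoise hXmeas hXindep hlaw hγ0 hP0 hP1 hαsq
      (Y := fun k ω => Z k ω b) (fun k => (measurable_pi_apply b).comp (hZmeas k))
      fun k ω => (norm_le_pi_norm (Z k ω) b).trans (hB k ω)] with ω hvisit hnoise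
  have hconv := tendsto_of_sgtPairStep hγ0 hγ1 hβ.le hP0 hP1 hQstar (fun k => (hα01 k).1) hαβ
    (hZ · ω) (hB · ω) hvisit fun b => hnoise b
  exact fun s a => ⟨hconv true s a, hconv false s a⟩

theorem sgt2_ql_convergence
    {S A : Type*} [Fintype S] [Fintype A] [Nonempty S] [Nonempty A]
    [DecidableEq S] [DecidableEq A]
    [MeasurableSpace S] [MeasurableSingletonClass S]
    [MeasurableSpace A] [MeasurableSingletonClass A]
    (P r : S → A → S → ℝ) (γ : ℝ) (hγ0 : 0 ≤ γ) (hγ1 : γ < 1)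
    (hP0 : ∀ s a s', 0 ≤ P s a s') (hP1 : ∀ s a, ∑ s', P s a s' = 1)
    (Qstar : S → A → ℝ) (hQstar : bellmanT P r γ Qstar = Qstar)
    (β : ℝ) (hβ : 0 < β)
    (α : ℕ → ℝ) (hα01 : ∀ k, 0 ≤ α k ∧ α k ≤ 1)
    (hαdiv : Tendsto (fun n => ∑ k ∈ Finset.range n, α k) atTop atTop)
    (hαsq : Summable fun k => (α k) ^ 2)
    (d : S → A → ℝ) (hd : ∀ s a, 0 < d s a)
    {Ω : Type*} [MeasurableSpace Ω] (μ : Measure Ω) [IsProbabilityMeasure μ]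
    (X : ℕ → Ω → S × A × S)
    (hXmeas : ∀ k, Measurable (X k))
    (hXindep : iIndepFun X μ)
    (hXlaw : ∀ k (s : S) (a : A) (s' : S),
      μ {ω | X k ω = (s, a, s')} = ENNReal.ofReal (d s a * P s a s'))
    (QA QB : ℕ → Ω → S → A → ℝ) (QA0 QB0 : S → A → ℝ)
    (hQA0 : ∀ ω, QA 0 ω = QA0) (hQB0 : ∀ ω, QB 0 ω = QB0)
    (hQArec : ∀ k ω s a, QA (k + 1) ω s a = QA k ω s a +
      α k * (if s = (X k ω).1 ∧ a = (X k ω).2.1 then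
          r (X k ω).1 (X k ω).2.1 (X k ω).2.2 + γ * maxQ (QB k ω) (X k ω).2.2 -
            QA k ω (X k ω).1 (X k ω).2.1 +
            β * (QB k ω (X k ω).1 (X k ω).2.1 - QA k ω (X k ω).1 (X k ω).2.1)
        else 0))
    (hQBrec : ∀ k ω s a, QB (k + 1) ω s a = QB k ω s a +
      α k * (if s = (X k ω).1 ∧ a = (X k ω).2.1 then
          r (X k ω).1 (X k ω).2.1 (X k ω).2.2 + γ * maxQ (QA k ω) (X k ω).2.2 -
            QB k ω (X k ω).1 (X k ω).2.1 +
            β * (QA k ω (X k ω).1 (X k ω).2.1 - QB k ω (X k ω).1 (X k ω).2.1)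
        else 0)) :
    ∀ᵐ ω ∂μ, ∀ s a,
      Tendsto (fun k => QA k ω s a) atTop (nhds (Qstar s a)) ∧
      Tendsto (fun k => QB k ω s a) atTop (nhds (Qstar s a)) :=
  sgt2_ql_convergence_general P r γ hγ0 hγ1 hP0 hP1 Qstar hQstar β hβ α hα01 hαdiv hαsq d hd μ X
    hXmeas hXindep hXlaw QA QB QA0 QB0 hQA0 hQB0 hQArec hQBrec
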